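/- arXiv:2604.03727 — 4 statements merged into one kernel-verified Lean document; each statement's English description precedes it below -/
import Mathlib

section
/- The divergence operator from the space x·ℙ_{k−2}(E) := {x q(x) : q ∈ ℙ_{k−2}} (vector fields of the form (x₁q, x₂q) with q a polynomial of degree ≤ k−2 in two variables) onto ℙ_{k−2}(E) is surjective for k ≥ 2. -/
open MvPolynomial

/-! By Leibniz, `div (x q) = n q + ∑ᵢ xᵢ ∂ᵢ q`, and Euler's operator `∑ᵢ xᵢ ∂ᵢ` multiplies a
monomial by its degree. So `q ↦ div (x q)` is diagonal in the monomial basis with eigenvalue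
`|m| + n ≠ 0` on `x^m`; dividing each coefficient of `p` by its eigenvalue gives a preimage
without raising the degree. -/

namespace MvPolynomial

variable {σ R : Type*}

section CommSemiring

variable [CommSemiring R]

lemma pderiv_X_mul_self (i : σ) (q : MvPolynomial σ R) :
    pderiv i (X i * q) = q + X i * pderiv i q := by
  rw [Derivation.leibniz, pderiv_X_self, smul_eq_mul, smul_eq_mul, mul_one, add_comm]

variable [Fintype σ]

/-- The divergence of the vector field `x q = (X i * q)ᵢ`. -/
noncomputable def divX : MvPolynomial σ R →ₗ[R] MvPolynomial σ R :=
  ∑ i, (pderiv i).toLinearMap ∘ₗ LinearMap.mulLeft R (X i)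

lemma divX_apply (q : MvPolynomial σ R) : divX q = ∑ i, pderiv i (X i * q) := by
  simp [divX]

lemma divX_monomial (m : σ →₀ ℕ) (c : R) :
    divX (monomial m c) = (m.degree + Fintype.card σ) • monomial m c := by
  simp only [divX_apply, pderiv_X_mul_self, Finset.sum_add_distrib, X_mul_pderiv_monomial,
    ← Finset.sum_smul, ← Finsupp.degree_eq_sum, Finset.sum_const, Finset.card_univ, add_smul,
    add_comm]

end CommSemiring

section Field

variable [Fintype σ] [Field R]

noncomputable def divXInv (p : MvPolynomial σ R) : MvPolynomial σ R :=
  ∑ m ∈ p.support, monomial m (coeff m p / (m.degree + Fintype.card σ : ℕ))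

lemma totalDegree_divXInv_le (p : MvPolynomial σ R) :
    (divXInv p).totalDegree ≤ p.totalDegree :=
  (totalDegree_finsetSum _ _).trans <| Finset.sup_le fun _ hm =>
    (totalDegree_monomial_le _ _).trans (le_totalDegree hm)

lemma divX_divXInv [CharZero R] [Nonempty σ] (p : MvPolynomial σ R) : divX (divXInv p) = p := by
  conv_rhs => rw [p.as_sum]
  refine (map_sum _ _ _).trans (Finset.sum_congr rfl fun m _ => ?_)
  have hne : ((m.degree + Fintype.card σ : ℕ) : R) ≠ 0 :=
    Nat.cast_ne_zero.mpr (Nat.add_pos_right _ Fintype.card_pos).ne'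
  rw [divX_monomial, ← map_nsmul, nsmul_eq_mul, mul_div_cancel₀ _ hne]

end Field

end MvPolynomial

theorem div_x_poly_surjective_general (k : ℕ)
    (p : MvPolynomial (Fin 2) ℝ) (hp : p.totalDegree ≤ k - 2) :
    ∃ q : MvPolynomial (Fin 2) ℝ, q.totalDegree ≤ k - 2 ∧
      pderiv (0 : Fin 2) (X 0 * q) + pderiv (1 : Fin 2) (X 1 * q) = p := by
  refine ⟨divXInv p, (totalDegree_divXInv_le p).trans hp, ?_⟩
  simpa [divX_apply, Fin.sum_univ_two] using divX_divXInv p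

/-- The divergence operator from `x·ℙ_{k−2}` onto `ℙ_{k−2}` is surjective for `k ≥ 2`:
for every `p ∈ ℙ_{k−2}` there is `q ∈ ℙ_{k−2}` with `div (x q) = p`. -/
theorem div_x_poly_surjective (k : ℕ) (hk : 2 ≤ k)
    (p : MvPolynomial (Fin 2) ℝ) (hp : p.totalDegree ≤ k - 2) :
    ∃ q : MvPolynomial (Fin 2) ℝ, q.totalDegree ≤ k - 2 ∧
      pderiv (0 : Fin 2) (X 0 * q) + pderiv (1 : Fin 2) (X 1 * q) = p :=
  div_x_poly_surjective_general k p hp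
end

section
/- The space [ℙ_{k−1}]² of two-variable polynomial vector fields of component degree ≤ k−1 decomposes as the direct sum [ℙ_{k−1}]² = x ℙ_{k−2} ⊕ curl(ℙ_k), where x ℙ_{k−2} = {(x₁q, x₂q) : q ∈ ℙ_{k−2}} and curl(ℙ_k) = {(∂p/∂x₂, −∂p/∂x₁) : p ∈ ℙ_k}. -/
/-!
The Euler operator `E = x₀∂₀ + x₁∂₁` multiplies every monomial by its degree, so it is
invertible on polynomials without constant term and its kernel consists of the constants.
Existence: choose `p` with `E p = x₁F₁ − x₀F₂`, which is possible as the right side has no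
constant term. Then `x₁(F₁ − ∂₁p) = x₀(F₂ + ∂₀p)`, and since `x₀` is prime and does not divide
`x₁`, we get `F₁ − ∂₁p = x₀q` and then `F₂ + ∂₀p = x₁q`.
Uniqueness: `x q = curl p` gives `E p = x₀(−x₁q) + x₁(x₀q) = 0`, so `p` is constant and `q = 0`.
-/

open MvPolynomial Finset

namespace MvPolynomial

theorem totalDegree_pderiv_le {σ R : Type*} [CommSemiring R] (i : σ) (φ : MvPolynomial σ R) :
    (pderiv i φ).totalDegree ≤ φ.totalDegree - 1 := by
  conv_lhs => rw [← sum_homogeneousComponent φ, map_sum]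
  refine (totalDegree_finsetSum _ _).trans (Finset.sup_le fun n hn => ?_)
  refine (homogeneousComponent_isHomogeneous n φ).pderiv.totalDegree_le.trans ?_
  have := Finset.mem_range.mp hn
  omega

theorem totalDegree_le_of_X_mul_le {σ R : Type*} [CommRing R] [IsDomain R] {i : σ}
    {q : MvPolynomial σ R} {m : ℕ} (h : (X i * q).totalDegree ≤ m) : q.totalDegree ≤ m - 1 := by
  rcases eq_or_ne q 0 with rfl | hq
  · simp
  · rw [totalDegree_mul_of_isDomain (X_ne_zero i) hq, totalDegree_X] at h
    omega

theorem coeff_sum_X_mul_pderiv {σ R : Type*} [Fintype σ] [CommSemiring R]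
    (φ : MvPolynomial σ R) (d : σ →₀ ℕ) :
    coeff d (∑ i, X i * pderiv i φ) = d.degree • coeff d φ := by
  classical
  induction φ using MvPolynomial.induction_on' with
  | monomial s a =>
    simp_rw [X_mul_pderiv_monomial, ← Finset.sum_smul, coeff_smul, coeff_monomial]
    split_ifs with h
    · rw [h, Finsupp.degree_eq_sum]
    · rw [smul_zero, smul_zero]
  | add φ ψ hφ hψ => simp only [map_add, mul_add, sum_add_distrib, coeff_add, hφ, hψ, smul_add]

section EulerInverse

variable {σ K : Type*} [Field K]

noncomputable def eulerInverse (g : MvPolynomial σ K) : MvPolynomial σ K :=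
  ∑ n ∈ range (g.totalDegree + 1), (n : K)⁻¹ • homogeneousComponent n g

theorem coeff_eulerInverse (g : MvPolynomial σ K) (d : σ →₀ ℕ) :
    coeff d (eulerInverse g) = (d.degree : K)⁻¹ * coeff d g := by
  simp only [eulerInverse, coeff_sum, coeff_smul, coeff_homogeneousComponent, smul_eq_mul,
    mul_ite, mul_zero]
  rw [Finset.sum_ite_eq]
  split_ifs with h
  · rfl
  · rw [coeff_eq_zero_of_totalDegree_lt, mul_zero]
    rw [← Finsupp.degree_apply]
    simpa [Nat.lt_succ_iff] using h

theorem totalDegree_eulerInverse_le (g : MvPolynomial σ K) :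
    (eulerInverse g).totalDegree ≤ g.totalDegree := by
  refine totalDegree_le_of_support_subset fun d hd => ?_
  rw [mem_support_iff, coeff_eulerInverse] at hd
  exact mem_support_iff.mpr (right_ne_zero_of_mul hd)

variable [Fintype σ] [CharZero K]

theorem sum_X_mul_pderiv_eulerInverse {g : MvPolynomial σ K} (hg : coeff 0 g = 0) :
    ∑ i, X i * pderiv i (eulerInverse g) = g := by
  ext d
  rw [coeff_sum_X_mul_pderiv, coeff_eulerInverse, nsmul_eq_mul]
  rcases eq_or_ne d 0 with rfl | hd
  · simp [hg]
  · have : (d.degree : K) ≠ 0 := by simpa [Finsupp.degree_eq_zero_iff] using hd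
    field_simp

theorem eq_C_of_sum_X_mul_pderiv_eq_zero {p : MvPolynomial σ K}
    (hp : ∑ i, X i * pderiv i p = 0) : p = C (coeff 0 p) := by
  classical
  ext d
  rcases eq_or_ne d 0 with rfl | hd
  · simp
  · have h := coeff_sum_X_mul_pderiv p d
    rw [hp, coeff_zero, eq_comm, smul_eq_zero, Finsupp.degree_eq_zero_iff] at h
    rw [h.resolve_left hd, coeff_C, if_neg (Ne.symm hd)]

end EulerInverse

section Plane

variable {K : Type*} [Field K] [CharZero K]

theorem X_zero_dvd_of_X_one_mul_eq {R : Type*} [CommRing R] [IsDomain R]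
    {A B : MvPolynomial (Fin 2) R} (h : X 1 * A = X 0 * B) : X 0 ∣ A :=
  (X_prime.dvd_or_dvd ⟨B, h⟩).resolve_left (by simp)

theorem exists_eq_X_mul_add_curl (m : ℕ) {F₁ F₂ : MvPolynomial (Fin 2) K}
    (h₁ : F₁.totalDegree ≤ m) (h₂ : F₂.totalDegree ≤ m) :
    ∃ q p : MvPolynomial (Fin 2) K, q.totalDegree ≤ m - 1 ∧ p.totalDegree ≤ m + 1 ∧
      F₁ = X 0 * q + pderiv 1 p ∧ F₂ = X 1 * q - pderiv 0 p := by
  set g := X 1 * F₁ - X 0 * F₂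
  have hg₀ : coeff 0 g = 0 := by simp [g, coeff_X_mul']
  have hg : g.totalDegree ≤ m + 1 := by
    refine (totalDegree_sub _ _).trans (max_le ?_ ?_) <;>
      refine (totalDegree_mul _ _).trans ?_ <;> rw [totalDegree_X] <;> omega
  set p := eulerInverse g
  have hE : X 0 * pderiv 0 p + X 1 * pderiv 1 p = X 1 * F₁ - X 0 * F₂ := by
    rw [← Fin.sum_univ_two (fun i => X i * pderiv i p)]
    exact sum_X_mul_pderiv_eulerInverse hg₀
  obtain ⟨q, hq⟩ := X_zero_dvd_of_X_one_mul_eq (A := F₁ - pderiv 1 p) (B := F₂ + pderiv 0 p)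
    (by linear_combination -hE)
  have hq₂ : X 1 * q = F₂ + pderiv 0 p := by
    refine mul_left_cancel₀ (X_ne_zero (0 : Fin 2)) ?_
    linear_combination -X 1 * hq - hE
  have hp : p.totalDegree ≤ m + 1 := (totalDegree_eulerInverse_le g).trans hg
  have hXq : (X 0 * q).totalDegree ≤ m := by
    have := totalDegree_pderiv_le 1 p
    exact hq ▸ (totalDegree_sub _ _).trans (max_le h₁ (by omega))
  exact ⟨q, p, totalDegree_le_of_X_mul_le hXq, hp, by linear_combination hq,
    by linear_combination -hq₂⟩

theorem eq_zero_of_X_mul_eq_curl {q p : MvPolynomial (Fin 2) K}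
    (h₁ : X 0 * q = pderiv 1 p) (h₂ : X 1 * q = -pderiv 0 p) : q = 0 := by
  have hE : ∑ i, X i * pderiv i p = 0 := by
    rw [Fin.sum_univ_two]
    linear_combination X 0 * h₂ - X 1 * h₁
  rw [eq_C_of_sum_X_mul_pderiv_eq_zero hE, pderiv_C] at h₁
  exact (mul_eq_zero.mp h₁).resolve_left (X_ne_zero 0)

end Plane

end MvPolynomial

/-- Direct sum decomposition `[ℙ_{k−1}]² = x ℙ_{k−2} ⊕ curl(ℙ_k)`:
every vector field with polynomial components of degree ≤ k−1 is a sum of an element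
of `x ℙ_{k−2}` and an element of `curl ℙ_k`, and the intersection of the two
subspaces is trivial. -/
theorem poly_vec_decomposition (k : ℕ) (hk : 2 ≤ k) :
    (∀ F₁ F₂ : MvPolynomial (Fin 2) ℝ,
      F₁.totalDegree ≤ k - 1 → F₂.totalDegree ≤ k - 1 →
      ∃ (q p : MvPolynomial (Fin 2) ℝ), q.totalDegree ≤ k - 2 ∧ p.totalDegree ≤ k ∧
        F₁ = X 0 * q + pderiv (1 : Fin 2) p ∧
        F₂ = X 1 * q - pderiv (0 : Fin 2) p) ∧
    (∀ q p : MvPolynomial (Fin 2) ℝ, q.totalDegree ≤ k - 2 → p.totalDegree ≤ k →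
      X 0 * q = pderiv (1 : Fin 2) p → X 1 * q = -(pderiv (0 : Fin 2) p) →
      q = 0) := by
  refine ⟨fun F₁ F₂ h₁ h₂ => ?_, fun q p _ _ => eq_zero_of_X_mul_eq_curl⟩
  obtain ⟨q, p, hq, hp, hF⟩ := exists_eq_X_mul_add_curl (k - 1) h₁ h₂
  exact ⟨q, p, by omega, by omega, hF⟩
end

section
/- For k ≥ 0 and ℓ ≥ 0, the identity x ℙ_{k−2} ⊕ curl(ℙ_{k+ℓ}) = [ℙ_{k−1}]² ⊕ curl(ℙ_{k+ℓ} \ ℙ_k) holds as subspaces of polynomial vector fields; that is, the space 𝒫_{k,ℓ} defined as [ℙ_{k−1}]² + curl(ℙ_{k+ℓ}) equals x ℙ_{k−2} + curl(ℙ_{k+ℓ}). -/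
/-!
Both spaces contain `curl ℙ_{k+ℓ}`, and `x ℙ_{k−2} ⊆ [ℙ_{k−1}]²`, so it suffices to write every
`(q, 0)` and `(0, q)` with `q` homogeneous of degree `n ≤ k − 1` in `x ℙ_{k−2} + curl ℙ_k`.
Euler's identity `x₁ ∂₁q + x₂ ∂₂q = n q` gives
`(n + 1) (q, 0) = curl (x₂ q) + x ∂₁q` and `(n + 1) (0, q) = curl (−x₁ q) + x ∂₂q`.
-/

open MvPolynomial

/-- The space `x ℙ_{k−2}` of two-variable polynomial vector fields
`(x₁ q, x₂ q)` with `deg q ≤ k − 2` (empty for `k < 2`). -/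
def xPolySet (k : ℕ) : Set (MvPolynomial (Fin 2) ℝ × MvPolynomial (Fin 2) ℝ) :=
  {F | ∃ q : MvPolynomial (Fin 2) ℝ, q.totalDegree + 2 ≤ k ∧ F = (X 0 * q, X 1 * q)}

/-- The space `[ℙ_{k−1}]²` of polynomial vector fields with components of
degree ≤ k − 1 (empty for `k = 0`). -/
def polyVecSet (k : ℕ) : Set (MvPolynomial (Fin 2) ℝ × MvPolynomial (Fin 2) ℝ) :=
  {F | F.1.totalDegree + 1 ≤ k ∧ F.2.totalDegree + 1 ≤ k}

/-- The space `curl ℙ_m = {(∂p/∂x₂, −∂p/∂x₁) : deg p ≤ m}`. -/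
def curlPolySet (m : ℕ) : Set (MvPolynomial (Fin 2) ℝ × MvPolynomial (Fin 2) ℝ) :=
  {F | ∃ p : MvPolynomial (Fin 2) ℝ, p.totalDegree ≤ m ∧
    F = (pderiv (1 : Fin 2) p, -(pderiv (0 : Fin 2) p))}

namespace MvPolynomial

variable {R : Type*} [CommRing R] {q : MvPolynomial (Fin 2) R} {n : ℕ}

theorem IsHomogeneous.X_zero_mul_pderiv_add_X_one_mul_pderiv (hq : q.IsHomogeneous n) :
    X 0 * pderiv 0 q + X 1 * pderiv 1 q = (n : R) • q := by
  rw [← Fin.sum_univ_two (fun i => X i * pderiv i q), hq.sum_X_mul_pderiv, Nat.cast_smul_eq_nsmul]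

theorem IsHomogeneous.curl_X_one_mul_add (hq : q.IsHomogeneous n) :
    (pderiv 1 (X 1 * q), -pderiv 0 (X 1 * q)) + (X 0 * pderiv 0 q, X 1 * pderiv 0 q) =
      ((n : R) + 1) • (q, (0 : MvPolynomial (Fin 2) R)) := by
  have euler := hq.X_zero_mul_pderiv_add_X_one_mul_pderiv
  simp only [pderiv_mul, pderiv_X_self, pderiv_X_of_ne (show (1 : Fin 2) ≠ 0 by decide),
    Prod.mk_add_mk, Prod.smul_mk, smul_zero, add_smul, one_smul, ← euler, Prod.mk.injEq]
  constructor <;> ring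

theorem IsHomogeneous.curl_neg_X_zero_mul_add (hq : q.IsHomogeneous n) :
    (pderiv 1 (-(X 0 * q)), -pderiv 0 (-(X 0 * q))) + (X 0 * pderiv 1 q, X 1 * pderiv 1 q) =
      ((n : R) + 1) • ((0 : MvPolynomial (Fin 2) R), q) := by
  have euler := hq.X_zero_mul_pderiv_add_X_one_mul_pderiv
  simp only [map_neg, pderiv_mul, pderiv_X_self, pderiv_X_of_ne (show (0 : Fin 2) ≠ 1 by decide),
    Prod.mk_add_mk, Prod.smul_mk, smul_zero, add_smul, one_smul, ← euler, Prod.mk.injEq]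
  constructor <;> ring

theorem mem_of_forall_isHomogeneous_mem {σ : Type*} {N : Submodule R (MvPolynomial σ R)} {k : ℕ}
    (hN : ∀ n < k, ∀ q : MvPolynomial σ R, q.IsHomogeneous n → q ∈ N)
    {f : MvPolynomial σ R} (hf : f.totalDegree < k) : f ∈ N := by
  rw [← sum_homogeneousComponent f]
  exact N.sum_mem fun i hi =>
    hN i ((Finset.mem_range_succ_iff.mp hi).trans_lt hf) _ (homogeneousComponent_isHomogeneous i f)

end MvPolynomial

theorem curlPolySet_mono {m m' : ℕ} (h : m ≤ m') : curlPolySet m ⊆ curlPolySet m' :=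
  fun _ ⟨p, hp, hF⟩ => ⟨p, hp.trans h, hF⟩

theorem xPolySet_subset_polyVecSet (k : ℕ) : xPolySet k ⊆ polyVecSet k := by
  rintro _ ⟨q, hq, rfl⟩
  have hdeg (i : Fin 2) : (X i * q).totalDegree ≤ 1 + q.totalDegree :=
    (totalDegree_mul _ _).trans (by rw [totalDegree_X])
  exact ⟨by linarith [hdeg 0], by linarith [hdeg 1]⟩

namespace MvPolynomial.IsHomogeneous

variable {k n : ℕ} {q : MvPolynomial (Fin 2) ℝ}

theorem X_mul_pderiv_mem_span_xPolySet (hq : q.IsHomogeneous n) (hn : n < k) (i : Fin 2) :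
    (X 0 * pderiv i q, X 1 * pderiv i q) ∈ Submodule.span ℝ (xPolySet k) := by
  rcases n with _ | m
  · rw [totalDegree_eq_zero_iff_eq_C.mp (Nat.le_zero.mp hq.totalDegree_le), pderiv_C,
      mul_zero, mul_zero, Prod.mk_zero_zero]
    exact zero_mem _
  · have hdeg := (hq.pderiv (i := i)).totalDegree_le
    rw [Nat.add_sub_cancel] at hdeg
    exact Submodule.subset_span ⟨_, by omega, rfl⟩

theorem mem_span_xPolySet_sup_curlPolySet (hq : q.IsHomogeneous n) (hn : n < k) :
    (q, 0) ∈ Submodule.span ℝ (xPolySet k) ⊔ Submodule.span ℝ (curlPolySet k) ∧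
      (0, q) ∈ Submodule.span ℝ (xPolySet k) ⊔ Submodule.span ℝ (curlPolySet k) := by
  have hn' : ((n : ℝ) + 1) ≠ 0 := by positivity
  have hX1 : (X 1 * q).totalDegree ≤ k := by
    linarith [((isHomogeneous_X ℝ 1).mul hq).totalDegree_le]
  have hX0 : (-(X 0 * q)).totalDegree ≤ k := by
    linarith [((isHomogeneous_X ℝ 0).mul hq).neg.totalDegree_le]
  constructor
  · rw [← Submodule.smul_mem_iff _ hn', ← hq.curl_X_one_mul_add]
    exact add_mem (Submodule.mem_sup_right (Submodule.subset_span ⟨_, hX1, rfl⟩))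
      (Submodule.mem_sup_left (hq.X_mul_pderiv_mem_span_xPolySet hn 0))
  · rw [← Submodule.smul_mem_iff _ hn', ← hq.curl_neg_X_zero_mul_add]
    exact add_mem (Submodule.mem_sup_right (Submodule.subset_span ⟨_, hX0, rfl⟩))
      (Submodule.mem_sup_left (hq.X_mul_pderiv_mem_span_xPolySet hn 1))

end MvPolynomial.IsHomogeneous

theorem span_polyVecSet_le (k : ℕ) :
    Submodule.span ℝ (polyVecSet k) ≤
      Submodule.span ℝ (xPolySet k) ⊔ Submodule.span ℝ (curlPolySet k) := by
  set M := Submodule.span ℝ (xPolySet k) ⊔ Submodule.span ℝ (curlPolySet k)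
  rw [Submodule.span_le]
  rintro ⟨f, g⟩ ⟨hf, hg⟩
  have hfst : f ∈ M.comap (LinearMap.inl ℝ _ _) := mem_of_forall_isHomogeneous_mem
    (fun _ hn _ hq => (hq.mem_span_xPolySet_sup_curlPolySet hn).1) hf
  have hsnd : g ∈ M.comap (LinearMap.inr ℝ _ _) := mem_of_forall_isHomogeneous_mem
    (fun _ hn _ hq => (hq.mem_span_xPolySet_sup_curlPolySet hn).2) hg
  simpa using add_mem (Submodule.mem_comap.mp hfst) (Submodule.mem_comap.mp hsnd)

/-- For `k, ℓ ≥ 0`, the space `𝒫_{k,ℓ} = [ℙ_{k−1}]² + curl ℙ_{k+ℓ}` equals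
`x ℙ_{k−2} + curl ℙ_{k+ℓ}` as subspaces of polynomial vector fields. -/
theorem Pkl_two_descriptions (k ℓ : ℕ) :
    Submodule.span ℝ (polyVecSet k ∪ curlPolySet (k + ℓ)) =
      Submodule.span ℝ (xPolySet k ∪ curlPolySet (k + ℓ)) := by
  have hcurl : Submodule.span ℝ (curlPolySet k) ≤ Submodule.span ℝ (curlPolySet (k + ℓ)) :=
    Submodule.span_mono (curlPolySet_mono (k.le_add_right ℓ))
  rw [Submodule.span_union, Submodule.span_union]
  apply le_antisymm
  · exact sup_le ((span_polyVecSet_le k).trans (sup_le_sup_left hcurl _)) le_sup_right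
  · exact sup_le_sup_right (Submodule.span_mono (xPolySet_subset_polyVecSet k)) _
end

section
/- Let K, K_h : H → H be bounded linear operators on a Hilbert space with adjoint-type operators K*, K_h* satisfying (Kf, g) = (f, K*g) for all f, g. Suppose B is a bounded sesquilinear form with B(Kf, v) = (f, v) for all v and B(v, K*g) = (v, g) for all v. Then for any f, f*: ((K − K_h)f, f*) = B((K − K_h)f, (K* − K_h*)f*) + (K_h f, f*) − B(K_h f, K_h* f*). -/
/-- The algebraic identity behind the doubled eigenvalue convergence rate: if `K, K*`
are solution operators with `B(Kf, v) = (f, v)` and `B(v, K*g) = (v, g)`, the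
adjoint relations `(Kf, g) = (f, K*g)`, `(K_h f, g) = (f, K_h* g)` hold, and `B` is
sesquilinear (additive in each argument), then
`((K − K_h)f, f*) = B((K − K_h)f, (K* − K_h*)f*) + (K_h f, f*) − B(K_h f, K_h* f*)`. -/
theorem eigenvalue_error_identity
    {H : Type*} [NormedAddCommGroup H] [InnerProductSpace ℂ H]
    (B : H → H → ℂ)
    (hB1 : ∀ a b c : H, B (a - b) c = B a c - B b c)
    (hB2 : ∀ a b c : H, B a (b - c) = B a b - B a c)
    (K Ks Kh Khs : H → H)
    (hadj : ∀ f g : H, (inner ℂ (K f) g : ℂ) = inner ℂ f (Ks g))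
    (hadjh : ∀ f g : H, (inner ℂ (Kh f) g : ℂ) = inner ℂ f (Khs g))
    (hK : ∀ f v : H, B (K f) v = (inner ℂ f v : ℂ))
    (hKs : ∀ v g : H, B v (Ks g) = (inner ℂ v g : ℂ))
    (f fs : H) :
    (inner ℂ (K f - Kh f) fs : ℂ)
      = B (K f - Kh f) (Ks fs - Khs fs) + (inner ℂ (Kh f) fs : ℂ)
          - B (Kh f) (Khs fs) := by
  rw [hB1, hB2, hB2, hK, hK, hKs, ← hadj, ← hadjh, inner_sub_left]
  ring
end
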